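/- arXiv:1304.1315 — 2 statements merged into one kernel-verified Lean document; each statement's English description precedes it below -/
import Mathlib

section
/- Let k≥4 be even and let G=(V,E) be a k-uniform connected hypergraph with maximum degree d>0 and Laplacian tensor L. Then λ(L) is equal to the unique real root of the equation (1−λ)^{k−1}(λ−d)+d=0 in the open interval (d,d+1) if and only if G is a hyperstar. -/
open Finset

variable {α : Type*} [DecidableEq α]

/-- The degree of a vertex `i`: the number of edges containing `i`. -/
def hdeg (E : Finset (Finset α)) (i : α) : ℕ := (E.filter (fun e => i ∈ e)).card

/-- The action of the Laplacian tensor: `(L x^{k-1})_i`. -/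
def lapAct (k : ℕ) (E : Finset (Finset α)) (x : α → ℝ) (i : α) : ℝ :=
  (hdeg E i : ℝ) * x i ^ (k - 1) - ∑ e ∈ E.filter (fun e => i ∈ e), ∏ j ∈ e.erase i, x j

/-- The action of the signless Laplacian tensor: `(Q x^{k-1})_i`. -/
def signAct (k : ℕ) (E : Finset (Finset α)) (x : α → ℝ) (i : α) : ℝ :=
  (hdeg E i : ℝ) * x i ^ (k - 1) + ∑ e ∈ E.filter (fun e => i ∈ e), ∏ j ∈ e.erase i, x j

/-- The action of the adjacency tensor: `(A x^{k-1})_i`. -/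
def adjAct (E : Finset (Finset α)) (x : α → ℝ) (i : α) : ℝ :=
  ∑ e ∈ E.filter (fun e => i ∈ e), ∏ j ∈ e.erase i, x j

/-- `lam` is an H-eigenvalue of the Laplacian tensor. -/
def IsLapEig (k : ℕ) (E : Finset (Finset α)) (lam : ℝ) : Prop :=
  ∃ x : α → ℝ, x ≠ 0 ∧ ∀ i, lapAct k E x i = lam * x i ^ (k - 1)

/-- `lam` is the largest H-eigenvalue of the Laplacian tensor. -/
def IsLargestLapEig (k : ℕ) (E : Finset (Finset α)) (lam : ℝ) : Prop :=
  IsLapEig k E lam ∧ ∀ mu : ℝ, IsLapEig k E mu → mu ≤ lam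

/-- `lam` is an H-eigenvalue of the signless Laplacian tensor. -/
def IsSignEig (k : ℕ) (E : Finset (Finset α)) (lam : ℝ) : Prop :=
  ∃ x : α → ℝ, x ≠ 0 ∧ ∀ i, signAct k E x i = lam * x i ^ (k - 1)

/-- `lam` is the largest H-eigenvalue of the signless Laplacian tensor. -/
def IsLargestSignEig (k : ℕ) (E : Finset (Finset α)) (lam : ℝ) : Prop :=
  IsSignEig k E lam ∧ ∀ mu : ℝ, IsSignEig k E mu → mu ≤ lam

/-- `lam` is an H-eigenvalue of the adjacency tensor. -/
def IsAdjEig (k : ℕ) (E : Finset (Finset α)) (lam : ℝ) : Prop :=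
  ∃ x : α → ℝ, x ≠ 0 ∧ ∀ i, adjAct E x i = lam * x i ^ (k - 1)

/-- `lam` is the largest H-eigenvalue of the adjacency tensor. -/
def IsLargestAdjEig (k : ℕ) (E : Finset (Finset α)) (lam : ℝ) : Prop :=
  IsAdjEig k E lam ∧ ∀ mu : ℝ, IsAdjEig k E mu → mu ≤ lam

/-- `G = (V, E)` is a `k`-uniform hyperstar of size `d`: there is a heart `h` and a
disjoint partition of the remaining vertices into `d` parts of size `k-1`, the edges
being the heart together with one part. -/
def IsHyperstar (k d : ℕ) (E : Finset (Finset α)) : Prop :=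
  ∃ (h : α) (P : Fin d → Finset α),
    (∀ i, h ∉ P i) ∧
    (∀ i, (P i).card = k - 1) ∧
    (∀ i j, i ≠ j → Disjoint (P i) (P j)) ∧
    (∀ v : α, v ≠ h → ∃ i, v ∈ P i) ∧
    E = Finset.image (fun i => insert h (P i)) Finset.univ

/-- The hypergraph is connected: any two distinct vertices are joined by a chain of
pairwise intersecting edges. -/
def IsConnectedH (E : Finset (Finset α)) : Prop :=
  ∀ i j : α, i ≠ j → Relation.TransGen (fun a b : α => ∃ e ∈ E, a ∈ e ∧ b ∈ e) i j

/-- For `k` even: the hypergraph is odd-bipartite. -/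
def IsOddBipartite [Fintype α] (E : Finset (Finset α)) : Prop :=
  E = ∅ ∨ ∃ V₁ : Finset α, V₁ ≠ ∅ ∧ V₁ ≠ Finset.univ ∧ ∀ e ∈ E, Odd (e ∩ V₁).card

/-- `G = (V, E)` is a `k`-uniform hypercycle of size `s`. -/
def IsHypercycle (k : ℕ) (s : ℕ) [NeZero s] (E : Finset (Finset α)) : Prop :=
  ∃ P : Fin s → Finset α,
    (∀ i, (P i).card = k) ∧
    (∀ v : α, ∃ i, v ∈ P i) ∧
    E = Finset.image P Finset.univ ∧
    (∀ i : Fin s, (P i ∩ P (i + 1)).card = 1) ∧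
    (∀ i j : Fin s, i ≠ j → j ≠ i + 1 → i ≠ j + 1 → P i ∩ P j = ∅) ∧
    Function.Injective (fun i : Fin s => P i ∩ P (i + 1))

/-!
Write `F(x) = Σ_i x_i (L x^{k-1})_i = Σ_e (Σ_{j ∈ e} x_j ^ k - k ∏_{j ∈ e} x_j)` (`lapForm`); each
edge term is nonnegative by AM-GM. By Lagrange multipliers the maximum of `F` on the unit
`k`-sphere is an H-eigenvalue, so `F(x) ≤ λ Σ_i x_i ^ k` for all `x`.

On a hyperstar, `1 - r` at the heart and `1` elsewhere is an eigenvector for `r`, while the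
eigen-equations at the leaves force `(μ - d) (μ - 1) ^ (k - 1) ≤ d` for every eigenvalue `μ ≠ 1`;
hence `λ = r`. Conversely, let `λ = r` and let `i` have degree `d`. Test `F ≤ r Σ x_j ^ k` on
`x = 1 - r` at `i`, `±1` on the neighbours of `i` and `0` elsewhere: by the equation defining `r`
the edges through `i` already use up the whole bound. So the edges through `i` are disjoint away
from `i`, and no other edge meets a neighbour of `i`, since it would contribute positively:
directly if it leaves the neighbourhood, and after flipping two signs inside one edge through `i`
if it does not. By connectedness every edge passes through `i`.
-/

variable {V : Type*}

section Forms

def edgeForm (k : ℕ) (e : Finset V) (x : V → ℝ) : ℝ :=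
  ∑ j ∈ e, x j ^ k - k * ∏ j ∈ e, x j

def lapForm (k : ℕ) (E : Finset (Finset V)) (x : V → ℝ) : ℝ :=
  ∑ e ∈ E, edgeForm k e x

def powerSum [Fintype V] (k : ℕ) (x : V → ℝ) : ℝ := ∑ i, x i ^ k

theorem sum_sum_filter_mem [Fintype V] [DecidableEq V] (E : Finset (Finset V))
    (g : V → Finset V → ℝ) :
    ∑ i, ∑ e ∈ E.filter (fun e => i ∈ e), g i e = ∑ e ∈ E, ∑ i ∈ e, g i e := by
  simp_rw [sum_filter]
  rw [sum_comm]
  exact sum_congr rfl fun e _ => by simp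

theorem mul_lapAct [DecidableEq V] {k : ℕ} (hk : k ≠ 0) (E : Finset (Finset V)) (x : V → ℝ)
    (i : V) :
    x i * lapAct k E x i = ∑ e ∈ E.filter (fun e => i ∈ e), (x i ^ k - ∏ j ∈ e, x j) := by
  rw [lapAct, hdeg, mul_sub, mul_sum, sum_sub_distrib, sum_const, nsmul_eq_mul,
    mul_left_comm, ← pow_succ', Nat.sub_add_cancel (Nat.one_le_iff_ne_zero.2 hk)]
  congr 1
  exact sum_congr rfl fun e he => mul_prod_erase e x (mem_filter.1 he).2

theorem lapForm_eq_sum_mul_lapAct [Fintype V] [DecidableEq V] {k : ℕ} (hk : k ≠ 0)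
    {E : Finset (Finset V)} (hunif : ∀ e ∈ E, e.card = k) (x : V → ℝ) :
    lapForm k E x = ∑ i, x i * lapAct k E x i := by
  simp_rw [mul_lapAct hk, sum_sum_filter_mem E (fun i e => x i ^ k - ∏ j ∈ e, x j)]
  refine sum_congr rfl fun e he => ?_
  rw [edgeForm, sum_sub_distrib, sum_const, hunif e he, nsmul_eq_mul]

theorem lapForm_eq_mul_powerSum_of_eigen [Fintype V] [DecidableEq V] {k : ℕ} (hk : k ≠ 0)
    {E : Finset (Finset V)} (hunif : ∀ e ∈ E, e.card = k) {μ : ℝ} {x : V → ℝ}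
    (hx : ∀ i, lapAct k E x i = μ * x i ^ (k - 1)) : lapForm k E x = μ * powerSum k x := by
  simp only [lapForm_eq_sum_mul_lapAct hk hunif, hx, powerSum, mul_sum]
  refine sum_congr rfl fun i _ => ?_
  rw [mul_left_comm, ← pow_succ', Nat.sub_add_cancel (Nat.one_le_iff_ne_zero.2 hk)]

theorem lapForm_smul {k : ℕ} {E : Finset (Finset V)} (hunif : ∀ e ∈ E, e.card = k)
    (t : ℝ) (x : V → ℝ) : lapForm k E (t • x) = t ^ k * lapForm k E x := by
  simp only [lapForm, edgeForm, mul_sum]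
  refine sum_congr rfl fun e he => ?_
  simp only [Pi.smul_apply, smul_eq_mul, mul_pow, prod_mul_distrib, prod_const, hunif e he,
    ← mul_sum]
  ring

theorem powerSum_smul [Fintype V] (k : ℕ) (t : ℝ) (x : V → ℝ) :
    powerSum k (t • x) = t ^ k * powerSum k x := by
  simp [powerSum, mul_pow, mul_sum]

theorem powerSum_pos [Fintype V] {k : ℕ} (hk : Even k) {x : V → ℝ} (hx : x ≠ 0) :
    0 < powerSum k x := by
  obtain ⟨i, hi⟩ := Function.ne_iff.1 hx
  exact sum_pos' (fun j _ => hk.pow_nonneg _) ⟨i, mem_univ i, hk.pow_pos hi⟩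

theorem edgeForm_nonneg {k : ℕ} (hk : Even k) {e : Finset V} (he : e.card = k) (x : V → ℝ) :
    0 ≤ edgeForm k e x := by
  rcases k.eq_zero_or_pos with rfl | hk0
  · simp [edgeForm]
  have hkR : (0 : ℝ) < k := by exact_mod_cast hk0
  have amgm : ∏ j ∈ e, |x j| ≤ ∑ j ∈ e, (k : ℝ)⁻¹ * |x j| ^ k := by
    calc ∏ j ∈ e, |x j| = ∏ j ∈ e, (|x j| ^ k) ^ (k : ℝ)⁻¹ := by
          refine prod_congr rfl fun j _ => ?_
          rw [← Real.rpow_natCast, ← Real.rpow_mul (abs_nonneg _), mul_inv_cancel₀ hkR.ne',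
            Real.rpow_one]
      _ ≤ ∑ j ∈ e, (k : ℝ)⁻¹ * |x j| ^ k :=
          Real.geom_mean_le_arith_mean_weighted e _ _ (fun _ _ => by positivity)
            (by rw [sum_const, he, nsmul_eq_mul, mul_inv_cancel₀ hkR.ne'])
            (fun _ _ => by positivity)
  have : ∏ j ∈ e, x j ≤ ∏ j ∈ e, |x j| := (le_abs_self _).trans (abs_prod _ _).le
  rw [← mul_sum] at amgm
  simp only [hk.pow_abs] at amgm
  rw [edgeForm, sub_nonneg]
  calc (k : ℝ) * ∏ j ∈ e, x j ≤ k * ((k : ℝ)⁻¹ * ∑ j ∈ e, x j ^ k) := by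
        gcongr; linarith
    _ = ∑ j ∈ e, x j ^ k := by field_simp

end Forms

section Lagrange

open ContinuousLinearMap

theorem hasStrictFDerivAt_pow_apply [Fintype V] (k : ℕ) (x : V → ℝ) (i : V) :
    HasStrictFDerivAt (fun y : V → ℝ => y i ^ k)
      ((k * x i ^ (k - 1)) • proj (R := ℝ) (φ := fun _ : V => ℝ) i) x :=
  (hasStrictDerivAt_pow k (x i)).comp_hasStrictFDerivAt x (hasStrictFDerivAt_apply i x)

theorem hasStrictFDerivAt_powerSum [Fintype V] (k : ℕ) (x : V → ℝ) :
    HasStrictFDerivAt (powerSum k)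
      (∑ i, (k * x i ^ (k - 1)) • proj (R := ℝ) (φ := fun _ : V => ℝ) i) x :=
  HasStrictFDerivAt.fun_sum fun i _ => hasStrictFDerivAt_pow_apply k x i

theorem hasStrictFDerivAt_lapForm [Fintype V] [DecidableEq V] (k : ℕ) (E : Finset (Finset V))
    (x : V → ℝ) :
    HasStrictFDerivAt (lapForm k E)
      (∑ i, (k * lapAct k E x i) • proj (R := ℝ) (φ := fun _ : V => ℝ) i) x := by
  have hedge : ∀ e : Finset V, HasStrictFDerivAt (edgeForm k e)
      (∑ j ∈ e, (k * (x j ^ (k - 1) - ∏ l ∈ e.erase j, x l)) •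
        proj (R := ℝ) (φ := fun _ : V => ℝ) j) x := fun e =>
    ((HasStrictFDerivAt.fun_sum fun j _ => hasStrictFDerivAt_pow_apply k x j).sub
      ((hasStrictFDerivAt_finsetProd (u := e) (x := x)).const_mul (k : ℝ))).congr_fderiv
      (by ext v; simp [mul_sub, sub_mul, sum_sub_distrib, mul_sum, mul_assoc])
  refine (HasStrictFDerivAt.fun_sum fun e _ => hedge e).congr_fderiv ?_
  ext v
  simp only [_root_.sum_apply, smul_apply, proj_apply, smul_eq_mul, lapAct, hdeg]
  rw [← sum_sum_filter_mem]
  refine sum_congr rfl fun i _ => ?_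
  rw [← sum_mul, ← mul_sum, sum_sub_distrib, sum_const, nsmul_eq_mul]

theorem sum_smul_proj_apply_single [Fintype V] [DecidableEq V] (c : V → ℝ) (i : V) :
    (∑ j, c j • proj (R := ℝ) (φ := fun _ : V => ℝ) j) (Pi.single i 1) = c i := by
  simp [Pi.single_apply]

theorem isCompact_powerSum_eq_one [Fintype V] {k : ℕ} (hk : Even k) (hk0 : k ≠ 0) :
    IsCompact {x : V → ℝ | powerSum k x = 1} := by
  refine Metric.isCompact_of_isClosed_isBounded
    (isClosed_eq (continuous_iff_continuousAt.2 fun x =>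
      (hasStrictFDerivAt_powerSum k x).continuousAt) continuous_const)
    ((Metric.isBounded_closedBall (x := 0) (r := 1)).subset fun x hx => ?_)
  rw [mem_closedBall_zero_iff, pi_norm_le_iff_of_nonneg zero_le_one]
  intro i
  have hle : x i ^ k ≤ 1 := (single_le_sum (f := fun j => x j ^ k)
    (fun j _ => hk.pow_nonneg _) (mem_univ i)).trans_eq hx
  rw [Real.norm_eq_abs, ← pow_le_one_iff_of_nonneg (abs_nonneg _) hk0, hk.pow_abs]
  exact hle

theorem exists_isLapEig_forall_lapForm_le [Fintype V] [DecidableEq V] [Nonempty V] {k : ℕ}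
    (hk : Even k) (hk0 : k ≠ 0) {E : Finset (Finset V)} (hunif : ∀ e ∈ E, e.card = k) :
    ∃ μ, IsLapEig k E μ ∧ ∀ x, powerSum k x = 1 → lapForm k E x ≤ μ := by
  have hkR : (k : ℝ) ≠ 0 := by exact_mod_cast hk0
  have hcont : Continuous (lapForm k E) :=
    continuous_iff_continuousAt.2 fun x => (hasStrictFDerivAt_lapForm k E x).continuousAt
  obtain ⟨x₀, hx₀, hmax⟩ := (isCompact_powerSum_eq_one (V := V) hk hk0).exists_isMaxOn
    ⟨Pi.single (Classical.arbitrary V) 1, by simp [powerSum, Pi.single_apply, hk0]⟩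
    hcont.continuousOn
  have hx₀ne : x₀ ≠ 0 := by rintro rfl; simp [powerSum, hk0] at hx₀
  obtain ⟨a, b, hab, hrel⟩ := IsLocalExtrOn.exists_multipliers_of_hasStrictFDerivAt_1d
    (f := powerSum k) (Or.inr (by rw [show powerSum k x₀ = 1 from hx₀]; exact hmax.localize))
    (hasStrictFDerivAt_powerSum k x₀) (hasStrictFDerivAt_lapForm k E x₀)
  have hcoord : ∀ i, a * x₀ i ^ (k - 1) + b * lapAct k E x₀ i = 0 := fun i => by
    have := congrArg (· (Pi.single i 1)) hrel
    simp only [add_apply, smul_apply, sum_smul_proj_apply_single, zero_apply, smul_eq_mul] at this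
    refine (mul_eq_zero.1 ?_).resolve_left hkR
    linear_combination this
  have hb : b ≠ 0 := by
    rintro rfl
    have ha : a ≠ 0 := by rintro rfl; exact hab rfl
    refine hx₀ne (funext fun i => ?_)
    obtain ⟨hi, -⟩ : x₀ i = 0 ∧ _ := by simpa [ha] using hcoord i
    exact hi
  have heig : ∀ i, lapAct k E x₀ i = -a / b * x₀ i ^ (k - 1) := fun i => by
    field_simp; linarith [hcoord i]
  refine ⟨-a / b, ⟨x₀, hx₀ne, heig⟩, fun x hx => (hmax hx).trans_eq ?_⟩
  rw [lapForm_eq_mul_powerSum_of_eigen hk0 hunif heig, show powerSum k x₀ = 1 from hx₀, mul_one]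

theorem IsLargestLapEig.lapForm_le [Fintype V] [DecidableEq V] {k : ℕ} (hk : Even k)
    (hk0 : k ≠ 0) {E : Finset (Finset V)} (hunif : ∀ e ∈ E, e.card = k) {lam : ℝ}
    (hlam : IsLargestLapEig k E lam) (x : V → ℝ) : lapForm k E x ≤ lam * powerSum k x := by
  rcases eq_or_ne x 0 with rfl | hx
  · rw [← zero_smul ℝ (0 : V → ℝ), lapForm_smul hunif, powerSum_smul]
    simp [hk0]
  obtain ⟨i, -⟩ := Function.ne_iff.1 hx
  have : Nonempty V := ⟨i⟩
  obtain ⟨μ, hμ, hmax⟩ := exists_isLapEig_forall_lapForm_le hk hk0 hunif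
  have hs := powerSum_pos hk hx
  set t : ℝ := (powerSum k x)⁻¹ ^ (k : ℝ)⁻¹
  have htk : t ^ k = (powerSum k x)⁻¹ := by
    rw [← Real.rpow_natCast, ← Real.rpow_mul (by positivity),
      inv_mul_cancel₀ (by exact_mod_cast hk0), Real.rpow_one]
  have := hmax (t • x) (by rw [powerSum_smul, htk, inv_mul_cancel₀ hs.ne'])
  rw [lapForm_smul hunif, htk, inv_mul_le_iff₀ hs] at this
  nlinarith [hlam.2 μ hμ]

end Lagrange

section Hyperstar

variable [DecidableEq V] {k d : ℕ} {E : Finset (Finset V)} {h : V} {P : Fin d → Finset V}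

theorem filter_mem_eq_singleton_of_mem_part (hhP : ∀ i, h ∉ P i)
    (hdisj : ∀ i j, i ≠ j → Disjoint (P i) (P j))
    (hE : E = image (fun i => insert h (P i)) univ) {i : Fin d} {v : V} (hv : v ∈ P i) :
    E.filter (fun e => v ∈ e) = {insert h (P i)} := by
  have hvh : v ≠ h := fun hvh => hhP i (hvh ▸ hv)
  ext e
  simp only [hE, mem_filter, mem_image, mem_univ, true_and, mem_singleton]
  constructor
  · rintro ⟨⟨j, rfl⟩, hve⟩
    obtain rfl : j = i := by
      by_contra hji
      exact disjoint_left.1 (hdisj j i hji) ((mem_insert.1 hve).resolve_left hvh) hv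
    rfl
  · rintro rfl
    exact ⟨⟨i, rfl⟩, mem_insert_of_mem hv⟩

theorem lapAct_of_mem_part (hhP : ∀ i, h ∉ P i)
    (hdisj : ∀ i j, i ≠ j → Disjoint (P i) (P j))
    (hE : E = image (fun i => insert h (P i)) univ) {i : Fin d} {v : V} (hv : v ∈ P i)
    (y : V → ℝ) : lapAct k E y v = y v ^ (k - 1) - y h * ∏ j ∈ (P i).erase v, y j := by
  have hvh : v ≠ h := fun hvh => hhP i (hvh ▸ hv)
  rw [lapAct, hdeg, filter_mem_eq_singleton_of_mem_part hhP hdisj hE hv, card_singleton,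
    sum_singleton, erase_insert_of_ne hvh.symm,
    prod_insert fun hh => hhP i (mem_of_mem_erase hh)]
  simp

theorem lapAct_heart (hhP : ∀ i, h ∉ P i) (hdisj : ∀ i j, i ≠ j → Disjoint (P i) (P j))
    (hne : ∀ i, (P i).Nonempty) (hE : E = image (fun i => insert h (P i)) univ) (y : V → ℝ) :
    lapAct k E y h = d * y h ^ (k - 1) - ∑ i, ∏ j ∈ P i, y j := by
  have hinj : Function.Injective fun i => insert h (P i) := fun i j hij => by
    by_contra hne'
    have hPij : P i = P j := by
      simpa only [erase_insert (hhP i), erase_insert (hhP j)] using congrArg (·.erase h) hij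
    exact (hne j).ne_empty (disjoint_self.1 (hPij ▸ hdisj i j hne'))
  have hfilter : E.filter (fun e => h ∈ e) = E :=
    filter_true_of_mem fun e he => by
      obtain ⟨i, -, rfl⟩ := mem_image.1 (hE ▸ he)
      exact mem_insert_self h (P i)
  rw [lapAct, hdeg, hfilter, hE, card_image_of_injective _ hinj, card_univ, Fintype.card_fin,
    sum_image fun i _ j _ hij => hinj hij]
  simp only [erase_insert (hhP _)]


theorem isLapEig_of_isHyperstar (hk : 2 ≤ k) (hstar : IsHyperstar k d E) {r : ℝ} (hr : r ≠ 1)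
    (hreq : (1 - r) ^ (k - 1) * (r - d) + d = 0) : IsLapEig k E r := by
  obtain ⟨h, P, hhP, hcard, hdisj, hcover, hE⟩ := hstar
  have hne : ∀ i, (P i).Nonempty := fun i => card_pos.1 (by rw [hcard i]; omega)
  refine ⟨fun v => if v = h then 1 - r else 1,
    fun h0 => sub_ne_zero.2 hr.symm (by simpa using congrFun h0 h), fun v => ?_⟩
  by_cases hvh : v = h
  · subst hvh
    rw [lapAct_heart hhP hdisj hne hE]
    have hone : ∀ i, ∏ j ∈ P i, (if j = v then 1 - r else 1 : ℝ) = 1 := fun i =>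
      prod_eq_one fun j hj => if_neg fun hjv : j = v => hhP i (hjv ▸ hj)
    simp only [hone, if_pos, sum_const, card_univ, Fintype.card_fin, nsmul_eq_mul, mul_one]
    linear_combination -hreq
  · obtain ⟨i, hvi⟩ := hcover v hvh
    rw [lapAct_of_mem_part hhP hdisj hE hvi, prod_eq_one fun j hj =>
      if_neg fun hjh : j = h => hhP i (hjh ▸ mem_of_mem_erase hj)]
    simp [hvh]

/-- The leaf equations of one part `S` of a hyperstar whose heart has value `a`. -/
theorem sub_one_pow_mul_neg_mul_prod_le {k : ℕ} (hk : Even k) (hk0 : k ≠ 0) {S : Finset V}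
    (hS : S.card = k - 1) {μ a : ℝ} (hμ : μ ≠ 1) {y : V → ℝ}
    (hy : ∀ v ∈ S, (1 - μ) * y v ^ (k - 1) = a * ∏ j ∈ S.erase v, y j) :
    (μ - 1) ^ (k - 1) * -(a * ∏ j ∈ S, y j) ≤ a ^ k := by
  have hμ' : 1 - μ ≠ 0 := sub_ne_zero.2 hμ.symm
  set c := (a * ∏ j ∈ S, y j) / (1 - μ) with hc_def
  have hyk : ∀ v ∈ S, y v ^ k = c := fun v hv => by
    rw [hc_def, eq_div_iff hμ', ← mul_prod_erase S y hv, ← mul_pow_sub_one hk0]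
    linear_combination y v * hy v hv
  have hq : a * ∏ j ∈ S, y j = (1 - μ) * c := by rw [hc_def]; field_simp
  rcases eq_or_ne c 0 with hc | hc
  · rw [hq, hc]; simpa using hk.pow_nonneg a
  have hqk : (∏ j ∈ S, y j) ^ k = c ^ (k - 1) := by
    rw [← prod_pow, prod_congr rfl hyk, prod_const, hS]
  have : (1 - μ) ^ k * c = a ^ k := by
    refine mul_right_cancel₀ (pow_ne_zero (k - 1) hc) ?_
    rw [mul_assoc, mul_pow_sub_one hk0, ← mul_pow, ← hq, mul_pow, hqk]
  have hodd : Odd (k - 1) := Nat.Even.sub_odd (Nat.one_le_iff_ne_zero.2 hk0) hk odd_one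
  rw [hq, ← this, ← neg_sub, hodd.neg_pow, ← pow_sub_one_mul hk0]
  exact le_of_eq (by ring)

theorem IsHyperstar.sub_mul_sub_one_pow_le (hk : Even k) (hk2 : 2 ≤ k) (hstar : IsHyperstar k d E)
    {μ : ℝ} (hμ : IsLapEig k E μ) (hμ1 : μ ≠ 1) : (μ - d) * (μ - 1) ^ (k - 1) ≤ d := by
  obtain ⟨h, P, hhP, hcard, hdisj, hcover, hE⟩ := hstar
  obtain ⟨z, hz0, hz⟩ := hμ
  have hk0 : k ≠ 0 := by omega
  have hpart :
      ∀ i, ∀ v ∈ P i, (1 - μ) * z v ^ (k - 1) = z h * ∏ j ∈ (P i).erase v, z j :=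
    fun i v hv => by linear_combination hz v - lapAct_of_mem_part hhP hdisj hE hv z
  have hzh : z h ≠ 0 := fun hzh => hz0 <| funext fun v => by
    rcases eq_or_ne v h with rfl | hvh
    · exact hzh
    obtain ⟨i, hvi⟩ := hcover v hvh
    have := hpart i v hvi
    rw [hzh, zero_mul, mul_eq_zero] at this
    exact pow_eq_zero_iff (by omega) |>.1 (this.resolve_left (sub_ne_zero.2 hμ1.symm))
  have hne : ∀ i, (P i).Nonempty := fun i => card_pos.1 (by rw [hcard i]; omega)
  have hheart : (μ - d) * z h ^ k = ∑ i, -(z h * ∏ j ∈ P i, z j) := by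
    have := hz h
    rw [lapAct_heart hhP hdisj hne hE] at this
    rw [sum_neg_distrib, ← mul_sum, ← mul_pow_sub_one hk0]
    linear_combination -z h * this
  have hzk : 0 < z h ^ k := hk.pow_pos hzh
  refine le_of_mul_le_mul_right ?_ hzk
  calc (μ - d) * (μ - 1) ^ (k - 1) * z h ^ k
      = ∑ i, (μ - 1) ^ (k - 1) * -(z h * ∏ j ∈ P i, z j) := by
        rw [← mul_sum, ← hheart]; ring
    _ ≤ ∑ _i : Fin d, z h ^ k :=
        sum_le_sum fun i _ => sub_one_pow_mul_neg_mul_prod_le hk hk0 (hcard i) hμ1 (hpart i)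
    _ = d * z h ^ k := by simp

theorem IsHyperstar.eq_of_isLargestLapEig (hk : Even k) (hk2 : 2 ≤ k) (hd : 0 < d)
    (hstar : IsHyperstar k d E) {r : ℝ} (hr : d < r)
    (hreq : (1 - r) ^ (k - 1) * (r - d) + d = 0) {lam : ℝ} (hlam : IsLargestLapEig k E lam) :
    lam = r := by
  have hr1 : 1 < r := lt_of_le_of_lt (by exact_mod_cast hd) hr
  refine le_antisymm (not_lt.1 fun hlt => ?_)
    (hlam.2 r (isLapEig_of_isHyperstar hk2 hstar hr1.ne' hreq))
  have hodd : Odd (k - 1) := Nat.Even.sub_odd (by omega) hk odd_one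
  have hbound := hstar.sub_mul_sub_one_pow_le hk hk2 hlam.1 (by linarith)
  have hroot : (r - d) * (r - 1) ^ (k - 1) = d := by
    rw [← neg_sub r 1, hodd.neg_pow] at hreq; linarith
  have := mul_lt_mul'' (sub_lt_sub_right hlt (d : ℝ))
    (pow_lt_pow_left₀ (sub_lt_sub_right hlt 1) (by linarith) (by omega : k - 1 ≠ 0))
    (by linarith)
    (pow_nonneg (by linarith) _)
  linarith

end Hyperstar

theorem Finset.card_biUnion_lt_sum_card {ι β : Type*} [DecidableEq ι] [DecidableEq β]
    {s : Finset ι} {t : ι → Finset β} {a b : ι} (ha : a ∈ s) (hb : b ∈ s) (hab : a ≠ b)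
    (h : ¬Disjoint (t a) (t b)) : #(s.biUnion t) < ∑ i ∈ s, #(t i) := by
  obtain ⟨v, hva, hvb⟩ := not_disjoint_iff.1 h
  rw [← insert_erase ha, biUnion_insert, sum_insert (notMem_erase a s)]
  have hinter : 0 < #(t a ∩ (s.erase a).biUnion t) :=
    card_pos.2
      ⟨v, mem_inter.2 ⟨hva, mem_biUnion.2 ⟨b, mem_erase.2 ⟨hab.symm, hb⟩, hvb⟩⟩⟩
  have := card_union_add_card_inter (t a) ((s.erase a).biUnion t)
  have := card_biUnion_le (s := s.erase a) (t := t)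
  omega

section TestVector

variable [DecidableEq V] {k d : ℕ} {E : Finset (Finset V)} {i : V}

def incidentEdges (E : Finset (Finset V)) (i : V) : Finset (Finset V) := E.filter (fun e => i ∈ e)

def neighbors (E : Finset (Finset V)) (i : V) : Finset V := (incidentEdges E i).biUnion (·.erase i)

theorem mem_incidentEdges {e : Finset V} : e ∈ incidentEdges E i ↔ e ∈ E ∧ i ∈ e :=
  mem_filter

theorem mem_neighbors {v : V} :
    v ∈ neighbors E i ↔ ∃ e ∈ E, i ∈ e ∧ v ≠ i ∧ v ∈ e := by
  simp [neighbors, incidentEdges, and_assoc]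

theorem self_notMem_neighbors : i ∉ neighbors E i := by simp [mem_neighbors]

theorem card_neighbors_le (hunif : ∀ e ∈ E, e.card = k) :
    #(neighbors E i) ≤ hdeg E i * (k - 1) :=
  card_biUnion_le_card_mul _ _ _ fun e he => by
    rw [card_erase_of_mem (mem_incidentEdges.1 he).2, hunif e (mem_incidentEdges.1 he).1]

def starVec (E : Finset (Finset V)) (i : V) (r : ℝ) (s : V → ℝ) (j : V) : ℝ :=
  if j = i then 1 - r else if j ∈ neighbors E i then s j else 0

theorem starVec_self (r : ℝ) (s : V → ℝ) : starVec E i r s i = 1 - r := if_pos rfl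

theorem starVec_of_mem_neighbors (r : ℝ) (s : V → ℝ) {j : V} (hj : j ∈ neighbors E i) :
    starVec E i r s j = s j := by
  rw [starVec, if_neg (ne_of_mem_of_not_mem hj self_notMem_neighbors), if_pos hj]

theorem starVec_of_notMem (r : ℝ) (s : V → ℝ) {j : V} (hji : j ≠ i)
    (hj : j ∉ neighbors E i) :
    starVec E i r s j = 0 := by
  rw [starVec, if_neg hji, if_neg hj]

theorem powerSum_starVec [Fintype V] (hk : k ≠ 0) (r : ℝ) {s : V → ℝ}
    (hs : ∀ j, s j ^ k = 1) :
    powerSum k (starVec E i r s) = (1 - r) ^ k + #(neighbors E i) := by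
  rw [powerSum, ← sum_subset (subset_univ (insert i (neighbors E i))),
    sum_insert self_notMem_neighbors,
    starVec_self, sum_congr rfl fun j hj => by rw [starVec_of_mem_neighbors r s hj, hs],
    sum_const, nsmul_one]
  intro j _ hj
  rw [mem_insert, not_or] at hj
  rw [starVec_of_notMem r s hj.1 hj.2, zero_pow hk]

theorem edgeForm_starVec_of_mem_incidentEdges (hunif : ∀ e ∈ E, e.card = k) (r : ℝ)
    {s : V → ℝ} (hs : ∀ j, s j ^ k = 1) {e : Finset V} (he : e ∈ incidentEdges E i)
    (hprod : ∏ j ∈ e.erase i, s j = 1) :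
    edgeForm k e (starVec E i r s) = (1 - r) ^ k + (k - 1) - k * (1 - r) := by
  obtain ⟨heE, hie⟩ := mem_incidentEdges.1 he
  have hN : ∀ j ∈ e.erase i, starVec E i r s j = s j := fun j hj =>
    starVec_of_mem_neighbors r s (mem_biUnion.2 ⟨e, he, hj⟩)
  have hk : 0 < k := hunif e heE ▸ card_pos.2 ⟨i, hie⟩
  rw [edgeForm, ← add_sum_erase e _ hie, ← mul_prod_erase e _ hie,
    sum_congr rfl fun j hj => by rw [hN j hj, hs], prod_congr rfl hN, hprod, starVec_self,
    sum_const, nsmul_one, card_erase_of_mem hie, hunif e heE, Nat.cast_pred hk]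
  ring


theorem add_sum_edgeForm_starVec_le [Fintype V] (hunif : ∀ e ∈ E, e.card = k) (hk : k ≠ 0)
    {r : ℝ} (hF : ∀ x, lapForm k E x ≤ r * powerSum k x) (hi : hdeg E i = d)
    (hreq : (1 - r) ^ (k - 1) * (r - d) + d = 0) {s : V → ℝ} (hs : ∀ j, s j ^ k = 1)
    (hprod : ∀ e ∈ incidentEdges E i, ∏ j ∈ e.erase i, s j = 1) :
    r * (d * (k - 1)) + ∑ e ∈ E.filter (fun e => i ∉ e), edgeForm k e (starVec E i r s) ≤
      r * #(neighbors E i) := by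
  have hstar : ∑ e ∈ incidentEdges E i, edgeForm k e (starVec E i r s) =
      d * ((1 - r) ^ k + (k - 1) - k * (1 - r)) := by
    rw [sum_congr rfl fun e he => edgeForm_starVec_of_mem_incidentEdges hunif r hs he (hprod e he),
      sum_const, nsmul_eq_mul, ← hi]
    rfl
  have h := hF (starVec E i r s)
  rw [lapForm, ← sum_filter_add_sum_filter_not E (fun e => i ∈ e), ← incidentEdges, hstar,
    powerSum_starVec hk r hs, ← pow_sub_one_mul hk] at h
  linear_combination h + (1 - r) * hreq


theorem edgeForm_starVec_nonpos [Fintype V] (hunif : ∀ e ∈ E, e.card = k) (hk : Even k)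
    (hk0 : k ≠ 0) {r : ℝ} (hr : 0 < r) (hF : ∀ x, lapForm k E x ≤ r * powerSum k x)
    (hi : hdeg E i = d) (hreq : (1 - r) ^ (k - 1) * (r - d) + d = 0) {s : V → ℝ}
    (hs : ∀ j, s j ^ k = 1) (hprod : ∀ e ∈ incidentEdges E i, ∏ j ∈ e.erase i, s j = 1)
    {e : Finset V} (he : e ∈ E) (hie : i ∉ e) : edgeForm k e (starVec E i r s) ≤ 0 := by
  have hbound := add_sum_edgeForm_starVec_le hunif hk0 hF hi hreq hs hprod
  have hle : edgeForm k e (starVec E i r s) ≤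
      ∑ e ∈ E.filter (fun e => i ∉ e), edgeForm k e (starVec E i r s) :=
    single_le_sum (fun f hf => edgeForm_nonneg hk (hunif f (mem_filter.1 hf).1) _)
      (mem_filter.2 ⟨he, hie⟩)
  have hN : (#(neighbors E i) : ℝ) ≤ d * (k - 1) := by
    rw [← Nat.cast_pred (Nat.pos_of_ne_zero hk0), ← Nat.cast_mul, ← hi]
    exact_mod_cast card_neighbors_le hunif
  nlinarith

theorem mul_le_card_neighbors [Fintype V] (hunif : ∀ e ∈ E, e.card = k) (hk : Even k)
    (hk0 : k ≠ 0) {r : ℝ} (hr : 0 < r) (hF : ∀ x, lapForm k E x ≤ r * powerSum k x)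
    (hi : hdeg E i = d) (hreq : (1 - r) ^ (k - 1) * (r - d) + d = 0) :
    d * (k - 1) ≤ #(neighbors E i) := by
  have hbound := add_sum_edgeForm_starVec_le hunif hk0 hF hi hreq (s := fun _ => 1)
    (fun _ => one_pow k) fun _ _ => prod_const_one
  have hsum :
      0 ≤ ∑ e ∈ E.filter (fun e => i ∉ e), edgeForm k e (starVec E i r fun _ => 1) :=
    sum_nonneg fun f hf => edgeForm_nonneg hk (hunif f (mem_filter.1 hf).1) _
  have : (d : ℝ) * (k - 1) ≤ #(neighbors E i) := le_of_mul_le_mul_left (by linarith) hr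
  rw [← Nat.cast_pred (Nat.pos_of_ne_zero hk0)] at this
  exact_mod_cast this

theorem disjoint_erase_of_mem_incidentEdges [Fintype V] (hunif : ∀ e ∈ E, e.card = k)
    (hk : Even k) (hk0 : k ≠ 0) {r : ℝ} (hr : 0 < r)
    (hF : ∀ x, lapForm k E x ≤ r * powerSum k x) (hi : hdeg E i = d)
    (hreq : (1 - r) ^ (k - 1) * (r - d) + d = 0) :
    ∀ f ∈ incidentEdges E i, ∀ g ∈ incidentEdges E i, f ≠ g →
      Disjoint (f.erase i) (g.erase i) := by
  intro f hf g hg hfg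
  by_contra hfg'
  have hlt := card_biUnion_lt_sum_card (t := (·.erase i)) hf hg hfg hfg'
  have hsum : ∑ e ∈ incidentEdges E i, #(e.erase i) = d * (k - 1) := by
    rw [sum_congr rfl fun e he => by
      rw [card_erase_of_mem (mem_incidentEdges.1 he).2, hunif e (mem_incidentEdges.1 he).1],
      sum_const, smul_eq_mul, ← hi]
    rfl
  have := mul_le_card_neighbors hunif hk hk0 hr hF hi hreq
  rw [neighbors] at this
  omega

theorem subset_neighbors_of_not_disjoint [Fintype V] (hunif : ∀ e ∈ E, e.card = k)
    (hk : Even k) (hk0 : k ≠ 0) {r : ℝ} (hr : 0 < r)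
    (hF : ∀ x, lapForm k E x ≤ r * powerSum k x) (hi : hdeg E i = d)
    (hreq : (1 - r) ^ (k - 1) * (r - d) + d = 0) {e : Finset V} (he : e ∈ E) (hie : i ∉ e) (hmeet : ¬Disjoint e (neighbors E i)) : e ⊆ neighbors E i := by
  by_contra hsub
  obtain ⟨w, hwe, hwN⟩ := not_subset.1 hsub
  obtain ⟨v, hve, hvN⟩ := not_disjoint_iff.1 hmeet
  have hnonpos := edgeForm_starVec_nonpos hunif hk hk0 hr hF hi hreq (s := fun _ => 1)
    (fun _ => one_pow k) (fun _ _ => prod_const_one) he hie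
  have hprod : ∏ j ∈ e, starVec E i r (fun _ => 1) j = 0 :=
    prod_eq_zero hwe (starVec_of_notMem r _ (ne_of_mem_of_not_mem hwe hie) hwN)
  have hsum : 1 ≤ ∑ j ∈ e, starVec E i r (fun _ => 1) j ^ k := by
    calc (1 : ℝ) = starVec E i r (fun _ => 1) v ^ k := by
          rw [starVec_of_mem_neighbors r _ hvN, one_pow]
      _ ≤ _ := single_le_sum (fun j _ => hk.pow_nonneg _) hve
  rw [edgeForm, hprod] at hnonpos
  linarith

theorem exists_mem_incidentEdges_not_subset (hunif : ∀ e ∈ E, e.card = k) (hk3 : 3 ≤ k)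
    (hdisj : ∀ f ∈ incidentEdges E i, ∀ g ∈ incidentEdges E i, f ≠ g →
      Disjoint (f.erase i) (g.erase i))
    {e : Finset V} (he : e.card = k) (hsub : e ⊆ neighbors E i) :
    ∃ f ∈ incidentEdges E i, ¬Disjoint (f.erase i) e ∧ ¬f.erase i ⊆ e := by
  have hcard : ∀ f ∈ incidentEdges E i, #(f.erase i) = k - 1 := fun f hf => by
    rw [card_erase_of_mem (mem_incidentEdges.1 hf).2, hunif f (mem_incidentEdges.1 hf).1]
  obtain ⟨v, hv⟩ : e.Nonempty := card_pos.1 (by omega)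
  obtain ⟨f, hf, hvf⟩ := mem_biUnion.1 (hsub hv)
  by_cases hfe : f.erase i ⊆ e
  · obtain ⟨z, hze, hzf⟩ := not_subset.1 fun h : e ⊆ f.erase i => by
      have := card_le_card h; have := hcard f hf; omega
    obtain ⟨g, hg, hzg⟩ := mem_biUnion.1 (hsub hze)
    have hfg : f ≠ g := by rintro rfl; exact hzf hzg
    refine ⟨g, hg, not_disjoint_iff.2 ⟨z, hzg, hze⟩, fun hge => ?_⟩
    have := card_union_of_disjoint (hdisj f hf g hg hfg)
    have := card_le_card (union_subset hfe hge)
    have := hcard f hf; have := hcard g hg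
    omega
  · exact ⟨f, hf, not_disjoint_iff.2 ⟨v, hvf, hv⟩, hfe⟩

/-- Flipping the signs of two neighbours `u, v` of `i` in one edge through `i`, with `v ∈ e` and
`u ∉ e`, keeps the edges through `i` optimal but makes the product over `e` negative. -/
theorem not_subset_neighbors [Fintype V] (hunif : ∀ e ∈ E, e.card = k) (hk : Even k)
    (hk3 : 3 ≤ k) {r : ℝ} (hr : 0 < r) (hF : ∀ x, lapForm k E x ≤ r * powerSum k x)
    (hi : hdeg E i = d) (hreq : (1 - r) ^ (k - 1) * (r - d) + d = 0)
    (hdisj : ∀ f ∈ incidentEdges E i, ∀ g ∈ incidentEdges E i, f ≠ g →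
      Disjoint (f.erase i) (g.erase i))
    {e : Finset V} (he : e ∈ E) (hie : i ∉ e) : ¬e ⊆ neighbors E i := by
  intro hsub
  obtain ⟨f, hf, hmeet, hnsub⟩ :=
    exists_mem_incidentEdges_not_subset hunif hk3 hdisj (hunif e he) hsub
  obtain ⟨v, hvf, hve⟩ := not_disjoint_iff.1 hmeet
  obtain ⟨u, huf, hue⟩ := not_subset.1 hnsub
  have huv : {u, v} ⊆ f.erase i := insert_subset huf (singleton_subset_iff.2 hvf)
  set s : V → ℝ := fun j => if j ∈ ({u, v} : Finset V) then -1 else 1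
  have hsign : ∀ T : Finset V, ∏ j ∈ T, s j = (-1) ^ #(T ∩ {u, v}) := fun T => by
    rw [prod_ite_mem, prod_const]
  have hs : ∀ j, s j ^ k = 1 := fun j => by
    simp only [s]; split_ifs <;> simp [hk.neg_one_pow]
  have hprod : ∀ g ∈ incidentEdges E i, ∏ j ∈ g.erase i, s j = 1 := fun g hg => by
    rw [hsign]
    rcases eq_or_ne g f with rfl | hgf
    · rw [inter_eq_right.2 huv, card_pair (ne_of_mem_of_not_mem hve hue).symm]; norm_num
    · rw [disjoint_iff_inter_eq_empty.1 (disjoint_of_subset_right huv (hdisj g hg f hf hgf)),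
        card_empty, pow_zero]
  have hnonpos := edgeForm_starVec_nonpos hunif hk (by omega) hr hF hi hreq hs hprod he hie
  have hxe : ∀ j ∈ e, starVec E i r s j = s j := fun j hj =>
    starVec_of_mem_neighbors r s (hsub hj)
  rw [edgeForm, sum_congr rfl fun j hj => by rw [hxe j hj, hs], prod_congr rfl hxe, hsign,
    inter_insert_of_notMem hue, inter_singleton_of_mem hve, sum_const, nsmul_one,
    hunif e he] at hnonpos
  norm_num at hnonpos
  linarith

theorem mem_insert_neighbors_of_isConnectedH (hconn : IsConnectedH E)
    (hsep : ∀ e ∈ E, i ∉ e → Disjoint e (neighbors E i)) (v : V) :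
    v ∈ insert i (neighbors E i) := by
  rcases eq_or_ne i v with rfl | hiv
  · exact mem_insert_self _ _
  have step : ∀ a b, a ∈ insert i (neighbors E i) → (∃ e ∈ E, a ∈ e ∧ b ∈ e) →
      b ∈ insert i (neighbors E i) := by
    rintro a b ha ⟨e, he, hae, hbe⟩
    by_cases hie : i ∈ e
    · rcases eq_or_ne b i with rfl | hbi
      · exact mem_insert_self _ _
      · exact mem_insert_of_mem (mem_neighbors.2 ⟨e, he, hie, hbi, hbe⟩)
    · have haN : a ∈ neighbors E i := (mem_insert.1 ha).resolve_left fun hai => hie (hai ▸ hae)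
      exact absurd (hsep e he hie) (not_disjoint_iff.2 ⟨a, hae, haN⟩)
  have hpath := hconn i v hiv
  clear hiv
  induction hpath with
  | single h => exact step _ _ (mem_insert_self _ _) h
  | tail _ h ih => exact step _ _ ih h

theorem isHyperstar_of_forall_mem (hunif : ∀ e ∈ E, e.card = k) (hall : ∀ e ∈ E, i ∈ e)
    (hcard : #E = d)
    (hdisj : ∀ e ∈ E, ∀ f ∈ E, e ≠ f → Disjoint (e.erase i) (f.erase i))
    (hcover : ∀ v, v ≠ i → ∃ e ∈ E, v ∈ e) : IsHyperstar k d E := by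
  set σ : Fin d ≃ E := (E.equivFin.trans (finCongr hcard)).symm
  have hσ : ∀ j, insert i ((σ j : Finset V).erase i) = σ j := fun j =>
    insert_erase (hall _ (σ j).2)
  refine ⟨i, fun j => (σ j : Finset V).erase i, fun j => notMem_erase i _, fun j => ?_,
    fun j j' hjj' => hdisj _ (σ j).2 _ (σ j').2 fun heq => hjj' (σ.injective (Subtype.ext heq)),
    fun v hv => ?_, ?_⟩
  · rw [card_erase_of_mem (hall _ (σ j).2), hunif _ (σ j).2]
  · obtain ⟨e, he, hve⟩ := hcover v hv
    exact ⟨σ.symm ⟨e, he⟩, by simp [hve, hv]⟩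
  · ext e
    simp only [mem_image, mem_univ, true_and, hσ]
    exact ⟨fun he => ⟨σ.symm ⟨e, he⟩, by simp⟩, by rintro ⟨j, rfl⟩; exact (σ j).2⟩

theorem isHyperstar_of_lapForm_le [Fintype V] (hunif : ∀ e ∈ E, e.card = k) (hk : Even k)
    (hk3 : 3 ≤ k) (hconn : IsConnectedH E) (hi : hdeg E i = d) {r : ℝ} (hr : 0 < r)
    (hreq : (1 - r) ^ (k - 1) * (r - d) + d = 0) (hF : ∀ x, lapForm k E x ≤ r * powerSum k x) :
    IsHyperstar k d E := by
  have hk0 : k ≠ 0 := by omega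
  have hdisj := disjoint_erase_of_mem_incidentEdges hunif hk hk0 hr hF hi hreq
  have hsep : ∀ e ∈ E, i ∉ e → Disjoint e (neighbors E i) := fun e he hie => by
    by_contra hmeet
    exact not_subset_neighbors hunif hk hk3 hr hF hi hreq hdisj he hie
      (subset_neighbors_of_not_disjoint hunif hk hk0 hr hF hi hreq he hie hmeet)
  have hcov := mem_insert_neighbors_of_isConnectedH hconn hsep
  have hall : ∀ e ∈ E, i ∈ e := fun e he => by
    by_contra hie
    obtain ⟨v, hv⟩ : e.Nonempty := card_pos.1 (by rw [hunif e he]; omega)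
    have hvN := (mem_insert.1 (hcov v)).resolve_left fun hvi => hie (hvi ▸ hv)
    exact not_disjoint_iff.2 ⟨v, hv, hvN⟩ (hsep e he hie)
  have hinc : incidentEdges E i = E := filter_true_of_mem hall
  refine isHyperstar_of_forall_mem hunif hall (by rw [← hinc]; exact hi)
    (by simpa only [hinc] using hdisj) fun v hv => ?_
  obtain ⟨e, he, -, -, hve⟩ := mem_neighbors.1 ((mem_insert.1 (hcov v)).resolve_left hv)
  exact ⟨e, he, hve⟩

end TestVector

theorem largest_lap_eig_eq_iff_hyperstar_general {n k d : ℕ} (hk : 4 ≤ k) (hkeven : Even k)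
    (E : Finset (Finset (Fin n))) (hunif : ∀ e ∈ E, e.card = k)
    (hconn : IsConnectedH E)
    (hdmax : ∃ i, hdeg E i = d) (hd : 0 < d)
    (lam : ℝ) (hlam : IsLargestLapEig k E lam)
    (r : ℝ) (hr : r ∈ Set.Ioo (d : ℝ) ((d : ℝ) + 1))
    (hreq : (1 - r) ^ (k - 1) * (r - (d : ℝ)) + (d : ℝ) = 0) :
    lam = r ↔ IsHyperstar k d E := by
  constructor
  · rintro rfl
    obtain ⟨i, hi⟩ := hdmax
    exact isHyperstar_of_lapForm_le hunif hkeven (by omega) hconn hi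
      (lt_of_le_of_lt d.cast_nonneg hr.1) hreq (hlam.lapForm_le hkeven (by omega) hunif)
  · intro hstar
    exact hstar.eq_of_isLargestLapEig hkeven (by omega) hd hr.1 hreq hlam

/-- For `k ≥ 4` even and a `k`-uniform connected hypergraph with maximum
degree `d > 0` and Laplacian tensor `L`, `λ(L)` equals the unique real root of
`(1-λ)^(k-1) * (λ-d) + d = 0` in `(d, d+1)` if and only if `G` is a hyperstar. -/
theorem largest_lap_eig_eq_iff_hyperstar {n k d : ℕ} (hk : 4 ≤ k) (hkeven : Even k)
    (hkn : k ≤ n) (E : Finset (Finset (Fin n))) (hunif : ∀ e ∈ E, e.card = k)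
    (hconn : IsConnectedH E)
    (hdle : ∀ i, hdeg E i ≤ d) (hdmax : ∃ i, hdeg E i = d) (hd : 0 < d)
    (lam : ℝ) (hlam : IsLargestLapEig k E lam)
    (r : ℝ) (hr : r ∈ Set.Ioo (d : ℝ) ((d : ℝ) + 1))
    (hreq : (1 - r) ^ (k - 1) * (r - (d : ℝ)) + (d : ℝ) = 0) :
    lam = r ↔ IsHyperstar k d E :=
  largest_lap_eig_eq_iff_hyperstar_general hk hkeven E hunif hconn hdmax hd lam hlam r hr hreq
end

section
/- Let G=(V,E) be a k-uniform hypergraph with Laplacian tensor L and signless Laplacian tensor Q. Then λ(L) ≤ λ(Q). If furthermore G is connected and k is even, then λ(L) = λ(Q) if and only if G is odd-bipartite. -/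
/-!
Let `F(x) = ⟨x, Q x^{k-1}⟩` and `g(x) = ∑ xᵢ^k`. A maximiser `y` of `F` on the compact set
`{x ≥ 0, g(x) = 1}` satisfies a first-order condition making it an H-eigenvector of `Q` for
`M = F(y)`, so `M ≤ λ(Q)`, and by homogeneity `F(z) ≤ M g(z)` for all `z ≥ 0`. For an H-eigenpair
`(λ, x)` of `L` the triangle inequality gives `|λ| |xᵢ|^{k-1} ≤ (Q|x|^{k-1})ᵢ`, whence
`|λ| g(|x|) ≤ F(|x|) ≤ M g(|x|)` and `λ(L) ≤ M ≤ λ(Q)`.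

If `λ(L) = λ(Q)`, then `|x|` attains `F = M g`. Connectedness forces `|x| > 0`: otherwise raising
the zero coordinates to `t` gains order `t^{k-1}` in `F` but only costs order `t^k` in `g`.
For even `k`, comparing `⟨x, L x^{k-1}⟩ = λ g(x)` with `F(|x|) = λ g(|x|)` shows that every edge
has negative product, so the negative coordinates of `x` form an odd-bipartition. Conversely,
flipping the signs of an eigenvector of `Q` on one side of an odd-bipartition gives an
eigenvector of `L` with the same eigenvalue.
-/

open Finset

variable {α : Type*} [DecidableEq α]

lemma HasDerivAt.nonpos_of_isMaxOn_Ici {h : ℝ → ℝ} {D a : ℝ} (hd : HasDerivAt h D a)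
    (hmax : IsMaxOn h (Set.Ici a) a) : D ≤ 0 := by
  have hcone : (1 : ℝ) ∈ posTangentConeAt (Set.Ici a) a :=
    mem_posTangentConeAt_of_segment_subset
      ((convex_Ici a).segment_subset Set.self_mem_Ici (by simp))
  simpa using hmax.localize.hasFDerivWithinAt_nonpos hd.hasDerivWithinAt.hasFDerivWithinAt hcone

section PowSum

variable {ι : Type*} [Fintype ι] {k : ℕ}

def powSum (k : ℕ) (x : ι → ℝ) : ℝ := ∑ i, x i ^ k

lemma continuous_powSum : Continuous (powSum k : (ι → ℝ) → ℝ) := by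
  unfold powSum; fun_prop

lemma powSum_smul (c : ℝ) (x : ι → ℝ) : powSum k (c • x) = c ^ k * powSum k x := by
  simp [powSum, mul_pow, mul_sum]

lemma powSum_pos {x : ι → ℝ} (hx : 0 ≤ x) (hx0 : x ≠ 0) : 0 < powSum k x := by
  obtain ⟨i, hi⟩ := Function.ne_iff.mp hx0
  exact sum_pos' (fun j _ => pow_nonneg (hx j) k) ⟨i, mem_univ i, pow_pos ((hx i).lt_of_ne' hi) k⟩

lemma powSum_abs (hk : Even k) (x : ι → ℝ) : powSum k |x| = powSum k x := by
  simp [powSum, hk.pow_abs]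

lemma powSum_max_le {z : ι → ℝ} {t : ℝ} (hz : 0 ≤ z) (ht : 0 ≤ t) :
    powSum k (fun j => max (z j) t) ≤ powSum k z + Fintype.card ι * t ^ k := by
  have hterm : ∀ j, max (z j) t ^ k ≤ z j ^ k + t ^ k := fun j => by
    rcases le_total (z j) t with h | h
    · rw [max_eq_right h]; linarith [pow_nonneg (hz j) k]
    · rw [max_eq_left h]; linarith [pow_nonneg ht k]
  simpa [powSum, sum_add_distrib] using sum_le_sum fun j (_ : j ∈ univ) => hterm j

lemma powSum_update [DecidableEq ι] (y : ι → ℝ) (i : ι) (v : ℝ) :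
    powSum k (Function.update y i v) = powSum k y + (v ^ k - y i ^ k) := by
  rw [powSum, powSum, ← add_sum_erase _ _ (mem_univ i), ← add_sum_erase _ _ (mem_univ i),
    Function.update_self,
    sum_congr rfl fun j hj => by rw [Function.update_of_ne (ne_of_mem_erase hj)]]
  ring

lemma isCompact_powSum_eq_one (hk : k ≠ 0) :
    IsCompact {y : ι → ℝ | 0 ≤ y ∧ powSum k y = 1} := by
  refine (isCompact_Icc (a := (0 : ι → ℝ)) (b := 1)).of_isClosed_subset ?_
    fun y ⟨hy0, hy1⟩ => ⟨hy0, fun i => ?_⟩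
  · exact (isClosed_le continuous_const continuous_id).inter
      (isClosed_eq continuous_powSum continuous_const)
  · have : y i ^ k ≤ 1 := hy1 ▸ single_le_sum (fun j _ => pow_nonneg (hy0 j) k) (mem_univ i)
    exact (pow_le_one_iff_of_nonneg (hy0 i) hk).mp this

lemma nonempty_powSum_eq_one [Nonempty ι] (hk : k ≠ 0) :
    {y : ι → ℝ | 0 ≤ y ∧ powSum k y = 1}.Nonempty := by
  classical
  obtain ⟨i⟩ := ‹Nonempty ι›
  refine ⟨Pi.single i 1, Pi.single_nonneg.mpr zero_le_one, ?_⟩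
  rw [powSum, Fintype.sum_eq_single i fun j hj => by simp [hj, hk]]
  simp

end PowSum

section SignForm

variable {ι : Type*} [DecidableEq ι] {k : ℕ} {E : Finset (Finset ι)}

lemma prod_update_eq_add (y : ι → ℝ) (i : ι) (v : ℝ) (e : Finset ι) :
    ∏ j ∈ e, Function.update y i v j =
      ∏ j ∈ e, y j + if i ∈ e then (v - y i) * ∏ j ∈ e.erase i, y j else 0 := by
  split_ifs with hi
  · rw [prod_update_of_mem hi, sdiff_singleton_eq_erase, ← mul_prod_erase e y hi]; ring
  · rw [prod_update_of_notMem hi, add_zero]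

lemma mul_signAct (hk : k ≠ 0) (x : ι → ℝ) (i : ι) :
    x i * signAct k E x i = (hdeg E i : ℝ) * x i ^ k + x i * adjAct E x i := by
  rw [signAct, ← adjAct, ← mul_pow_sub_one hk]; ring

lemma mul_lapAct_s6 (hk : k ≠ 0) (x : ι → ℝ) (i : ι) :
    x i * lapAct k E x i = (hdeg E i : ℝ) * x i ^ k - x i * adjAct E x i := by
  rw [lapAct, ← adjAct, ← mul_pow_sub_one hk]; ring

variable [Fintype ι]

/-- The form `⟨x, Q x^{k-1}⟩` of a `k`-uniform hypergraph, written edgewise. -/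
def signForm (k : ℕ) (E : Finset (Finset ι)) (x : ι → ℝ) : ℝ :=
  ∑ i, (hdeg E i : ℝ) * x i ^ k + k * ∑ e ∈ E, ∏ j ∈ e, x j

lemma continuous_signForm : Continuous (signForm k E) := by
  unfold signForm; fun_prop

lemma sum_mul_adjAct (E : Finset (Finset ι)) (x : ι → ℝ) :
    ∑ i, x i * adjAct E x i = ∑ e ∈ E, (#e : ℝ) * ∏ j ∈ e, x j := by
  simp only [adjAct, mul_sum, sum_filter, mul_ite, mul_zero]
  rw [sum_comm]
  refine sum_congr rfl fun e _ => ?_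
  rw [sum_ite_mem, univ_inter, sum_congr rfl fun i hi => mul_prod_erase e x hi, sum_const,
    nsmul_eq_mul]

lemma sum_mul_adjAct_of_uniform (hunif : ∀ e ∈ E, #e = k) (x : ι → ℝ) :
    ∑ i, x i * adjAct E x i = k * ∑ e ∈ E, ∏ j ∈ e, x j := by
  rw [sum_mul_adjAct, mul_sum]
  exact sum_congr rfl fun e he => by rw [hunif e he]

lemma sum_mul_signAct (hk : k ≠ 0) (hunif : ∀ e ∈ E, #e = k) (x : ι → ℝ) :
    ∑ i, x i * signAct k E x i = signForm k E x := by
  simp only [mul_signAct hk, sum_add_distrib, sum_mul_adjAct_of_uniform hunif, signForm]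

lemma sum_mul_lapAct (hk : k ≠ 0) (hunif : ∀ e ∈ E, #e = k) (x : ι → ℝ) :
    ∑ i, x i * lapAct k E x i =
      ∑ i, (hdeg E i : ℝ) * x i ^ k - k * ∑ e ∈ E, ∏ j ∈ e, x j := by
  simp only [mul_lapAct_s6 hk, sum_sub_distrib, sum_mul_adjAct_of_uniform hunif]

lemma signForm_smul (hunif : ∀ e ∈ E, #e = k) (c : ℝ) (x : ι → ℝ) :
    signForm k E (c • x) = c ^ k * signForm k E x := by
  have hprod : ∀ e ∈ E, ∏ j ∈ e, c * x j = c ^ k * ∏ j ∈ e, x j := fun e he => by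
    rw [prod_mul_distrib, prod_const, hunif e he]
  simp only [signForm, Pi.smul_apply, smul_eq_mul, sum_congr rfl hprod, mul_pow,
    mul_left_comm _ (c ^ k), ← mul_sum]
  ring

lemma signForm_nonneg {x : ι → ℝ} (hx : 0 ≤ x) : 0 ≤ signForm k E x := by
  exact add_nonneg (sum_nonneg fun i _ => mul_nonneg (Nat.cast_nonneg _) (pow_nonneg (hx i) k))
    (mul_nonneg (Nat.cast_nonneg k) (sum_nonneg fun e _ => prod_nonneg fun j _ => hx j))

lemma signForm_update (y : ι → ℝ) (i : ι) (v : ℝ) :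
    signForm k E (Function.update y i v) =
      signForm k E y + hdeg E i * (v ^ k - y i ^ k) + k * ((v - y i) * adjAct E y i) := by
  have hdeg_update : ∑ j, (hdeg E j : ℝ) * Function.update y i v j ^ k =
      ∑ j, (hdeg E j : ℝ) * y j ^ k + hdeg E i * (v ^ k - y i ^ k) := by
    rw [← add_sum_erase _ _ (mem_univ i), ← add_sum_erase _ _ (mem_univ i), Function.update_self,
      sum_congr rfl fun j hj => by rw [Function.update_of_ne (ne_of_mem_erase hj)]]
    ring
  have hedge_update : ∑ e ∈ E, ∏ j ∈ e, Function.update y i v j =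
      ∑ e ∈ E, ∏ j ∈ e, y j + (v - y i) * adjAct E y i := by
    simp only [prod_update_eq_add, sum_add_distrib, ← sum_filter, adjAct, mul_sum]
  rw [signForm, signForm, hdeg_update, hedge_update]
  ring

lemma signForm_add_le {z w : ι → ℝ} (hz : 0 ≤ z) (hzw : z ≤ w) {e : Finset ι} (he : e ∈ E) :
    signForm k E z + k * (∏ j ∈ e, w j - ∏ j ∈ e, z j) ≤ signForm k E w := by
  have hprod : ∀ e : Finset ι, ∏ j ∈ e, z j ≤ ∏ j ∈ e, w j := fun e =>
    prod_le_prod (fun j _ => hz j) (fun j _ => hzw j)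
  have hdeg_le : ∑ i, (hdeg E i : ℝ) * z i ^ k ≤ ∑ i, (hdeg E i : ℝ) * w i ^ k :=
    sum_le_sum fun i _ => by gcongr; exacts [hz i, hzw i]
  have hedge : ∏ j ∈ e, w j - ∏ j ∈ e, z j ≤ ∑ f ∈ E, (∏ j ∈ f, w j - ∏ j ∈ f, z j) :=
    single_le_sum (f := fun f => ∏ j ∈ f, w j - ∏ j ∈ f, z j)
      (fun f _ => sub_nonneg.mpr (hprod f)) he
  rw [sum_sub_distrib] at hedge
  unfold signForm
  nlinarith [(Nat.cast_nonneg k : (0 : ℝ) ≤ k)]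

end SignForm

section Rayleigh

variable {ι : Type*} [Fintype ι] [DecidableEq ι] {k : ℕ} {E : Finset (Finset ι)}

lemma signForm_le_of_isMaxOn (hk : k ≠ 0) (hunif : ∀ e ∈ E, #e = k) {y : ι → ℝ}
    (hmax : IsMaxOn (signForm k E) {y | 0 ≤ y ∧ powSum k y = 1} y) {z : ι → ℝ} (hz : 0 ≤ z) :
    signForm k E z ≤ signForm k E y * powSum k z := by
  rcases eq_or_ne z 0 with rfl | hz0
  · have hF0 := signForm_smul hunif 0 (0 : ι → ℝ)
    simp only [smul_zero, zero_pow hk, zero_mul] at hF0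
    simp [hF0, powSum, zero_pow hk]
  have hg := powSum_pos hz hz0 (k := k)
  set r := powSum k z ^ ((k : ℝ)⁻¹)
  have hr : 0 < r := Real.rpow_pos_of_pos hg _
  have hrk : r ^ k = powSum k z := Real.rpow_inv_natCast_pow hg.le hk
  have hmem : r⁻¹ • z ∈ {y | 0 ≤ y ∧ powSum k y = 1} :=
    ⟨smul_nonneg (inv_nonneg.mpr hr.le) hz,
      by rw [powSum_smul, inv_pow, hrk, inv_mul_cancel₀ hg.ne']⟩
  have hle : signForm k E (r⁻¹ • z) ≤ signForm k E y := hmax hmem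
  rwa [signForm_smul hunif, inv_pow, hrk, inv_mul_le_iff₀ hg, mul_comm] at hle

lemma exists_signForm_le [Nonempty ι] (hk : k ≠ 0) (hunif : ∀ e ∈ E, #e = k) :
    ∃ y, 0 ≤ y ∧ powSum k y = 1 ∧
      ∀ z, 0 ≤ z → signForm k E z ≤ signForm k E y * powSum k z := by
  obtain ⟨y, ⟨hy, hy1⟩, hmax⟩ := (isCompact_powSum_eq_one hk).exists_isMaxOn
    (nonempty_powSum_eq_one (ι := ι) hk) continuous_signForm.continuousOn
  exact ⟨y, hy, hy1, fun z hz => signForm_le_of_isMaxOn hk hunif hmax hz⟩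

lemma signAct_le_of_signForm_le (hk : k ≠ 0) {M : ℝ}
    (hbound : ∀ z, 0 ≤ z → signForm k E z ≤ M * powSum k z) {y : ι → ℝ} (hy : 0 ≤ y)
    (hFy : signForm k E y = M * powSum k y) (i : ι) :
    signAct k E y i ≤ M * y i ^ (k - 1) := by
  let h : ℝ → ℝ := fun t => (hdeg E i - M) * ((y i + t) ^ k - y i ^ k) + k * adjAct E y i * t
  have hmax : IsMaxOn h (Set.Ici 0) 0 := isMaxOn_iff.mpr fun t (ht : 0 ≤ t) => by
    have hw : 0 ≤ Function.update y i (y i + t) := by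
      intro j
      rcases eq_or_ne j i with rfl | hj
      · simpa using add_nonneg (hy j) ht
      · simpa [hj] using hy j
    have hht : h t = signForm k E (Function.update y i (y i + t)) -
        M * powSum k (Function.update y i (y i + t)) := by
      dsimp only [h]; rw [signForm_update, powSum_update, hFy]; ring
    have hh0 : h 0 = 0 := by dsimp only [h]; ring
    linarith [hbound _ hw]
  have hderiv : HasDerivAt h
      ((hdeg E i - M) * (k * (y i + 0) ^ (k - 1) * 1) + k * adjAct E y i * 1) 0 :=
    ((((hasDerivAt_id' 0).const_add (y i)).pow k).sub_const (y i ^ k) |>.const_mul _).add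
      ((hasDerivAt_id' 0).const_mul _)
  have hD : (k : ℝ) * (signAct k E y i - M * y i ^ (k - 1)) ≤ 0 := by
    convert hderiv.nonpos_of_isMaxOn_Ici hmax using 1
    rw [signAct, ← adjAct]; ring
  have hk0 : (0 : ℝ) < k := by positivity
  exact sub_nonpos.mp (nonpos_of_mul_nonpos_right hD hk0)

lemma signAct_eq_of_signForm_le (hk : 2 ≤ k) (hunif : ∀ e ∈ E, #e = k) {M : ℝ}
    (hbound : ∀ z, 0 ≤ z → signForm k E z ≤ M * powSum k z) {y : ι → ℝ} (hy : 0 ≤ y)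
    (hFy : signForm k E y = M * powSum k y) (i : ι) :
    signAct k E y i = M * y i ^ (k - 1) := by
  have hle := signAct_le_of_signForm_le (by omega) hbound hy hFy
  -- The defects `y j * (M y_j^{k-1} - (Q y^{k-1})_j)` are nonnegative and sum to
  -- `M g(y) - F(y) = 0`, so they vanish; where `y i = 0` the inequality is squeezed directly.
  have hsum : ∑ j, y j * (M * y j ^ (k - 1) - signAct k E y j) = 0 := by
    simp only [mul_sub, sum_sub_distrib, sum_mul_signAct (by omega) hunif, mul_left_comm _ M,
      mul_pow_sub_one (show k ≠ 0 by omega), ← mul_sum, hFy, powSum, sub_self]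
  have hterm := (sum_eq_zero_iff_of_nonneg fun j _ =>
    mul_nonneg (hy j) (sub_nonneg.mpr (hle j))).mp hsum i (mem_univ i)
  rcases (hy i).eq_or_lt with h0 | hpos
  · have hyi : y i = 0 := h0.symm
    have hA : 0 ≤ adjAct E y i := sum_nonneg fun e _ => prod_nonneg fun j _ => hy j
    have := hle i
    rw [signAct, ← adjAct, hyi, zero_pow (by omega)] at this ⊢
    simp only [mul_zero, zero_add] at this ⊢
    linarith
  · exact (sub_eq_zero.mp ((mul_eq_zero.mp hterm).resolve_left hpos.ne')).symm

lemma exists_isSignEig_signForm_le [Nonempty ι] (hk : 2 ≤ k) (hunif : ∀ e ∈ E, #e = k) :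
    ∃ M, IsSignEig k E M ∧ ∀ z, 0 ≤ z → signForm k E z ≤ M * powSum k z := by
  obtain ⟨y, hy, hy1, hbound⟩ := exists_signForm_le (E := E) (by omega) hunif
  have hy0 : y ≠ 0 := by
    rintro rfl
    simp [powSum, zero_pow (show k ≠ 0 by omega)] at hy1
  refine ⟨signForm k E y, ⟨y, hy0, signAct_eq_of_signForm_le hk hunif hbound hy ?_⟩, hbound⟩
  rw [hy1, mul_one]

end Rayleigh

section Comparison

variable {ι : Type*} {k : ℕ} {E : Finset (Finset ι)}

lemma IsConnectedH.exists_mem_mem_of_not (hconn : IsConnectedH E) {p : ι → Prop} {i j : ι}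
    (hi : p i) (hj : ¬ p j) : ∃ e ∈ E, (∃ a ∈ e, p a) ∧ ∃ b ∈ e, ¬ p b := by
  have hij : i ≠ j := fun h => hj (h ▸ hi)
  induction hconn i j hij with
  | single h =>
    obtain ⟨e, he, hie, hje⟩ := h
    exact ⟨e, he, ⟨i, hie, hi⟩, ⟨_, hje, hj⟩⟩
  | @tail b c _ hbc ih =>
    obtain ⟨e, he, hbe, hce⟩ := hbc
    by_cases hb : p b
    · exact ⟨e, he, ⟨b, hbe, hb⟩, ⟨c, hce, hj⟩⟩
    · exact ih hb (fun h => hb (h ▸ hi))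

lemma odd_card_filter_neg_of_prod_neg {s : Finset ι} {x : ι → ℝ} (h : ∏ j ∈ s, x j < 0) :
    Odd #(s.filter (x · < 0)) := by
  have hsign : ∀ j, x j = (if x j < 0 then -1 else 1) * |x j| := fun j => by
    split_ifs with hj
    · rw [abs_of_neg hj]; ring
    · rw [abs_of_nonneg (not_lt.mp hj), one_mul]
  rw [prod_congr rfl fun j _ => hsign j, prod_mul_distrib, prod_ite, prod_const, prod_const_one,
    mul_one] at h
  refine Nat.not_even_iff_odd.mp fun heven => ?_
  rw [heven.neg_one_pow, one_mul] at h
  exact h.not_ge (prod_nonneg fun j _ => abs_nonneg _)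

variable [DecidableEq ι]

lemma abs_mul_pow_le_signAct_abs {lam : ℝ} {x : ι → ℝ}
    (hx : ∀ i, lapAct k E x i = lam * x i ^ (k - 1)) (i : ι) :
    |lam| * |x i| ^ (k - 1) ≤ signAct k E |x| i := by
  have hA : |adjAct E x i| ≤ adjAct E |x| i :=
    (abs_sum_le_sum_abs _ _).trans_eq (by simp only [adjAct, abs_prod, Pi.abs_apply])
  calc |lam| * |x i| ^ (k - 1) = |(hdeg E i : ℝ) * x i ^ (k - 1) - adjAct E x i| := by
        rw [← abs_pow, ← abs_mul, ← hx i, lapAct, adjAct]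
    _ ≤ |(hdeg E i : ℝ) * x i ^ (k - 1)| + |adjAct E x i| := abs_sub _ _
    _ ≤ signAct k E |x| i := by
        rw [signAct, ← adjAct, abs_mul, abs_pow, Nat.abs_cast, Pi.abs_apply]
        linarith

lemma mul_pow_card_sub_one_le_prod_max {z : ι → ℝ} (hz : 0 ≤ z) {t : ℝ} (ht : 0 ≤ t)
    {e : Finset ι} {b : ι} (hb : b ∈ e) :
    z b * t ^ (#e - 1) ≤ ∏ j ∈ e, max (z j) t := by
  rw [← mul_prod_erase e _ hb, ← card_erase_of_mem hb, ← prod_const]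
  exact mul_le_mul (le_max_left _ _) (prod_le_prod (fun _ _ => ht) fun j _ => le_max_right _ _)
    (prod_nonneg fun _ _ => ht) ((hz b).trans (le_max_left _ _))

variable [Fintype ι]

lemma abs_mul_powSum_abs_le (hk : k ≠ 0) (hunif : ∀ e ∈ E, #e = k) {lam : ℝ} {x : ι → ℝ}
    (hx : ∀ i, lapAct k E x i = lam * x i ^ (k - 1)) :
    |lam| * powSum k |x| ≤ signForm k E |x| := by
  rw [← sum_mul_signAct hk hunif, powSum, mul_sum]
  refine sum_le_sum fun i _ => ?_
  calc |lam| * |x| i ^ k = |x| i * (|lam| * |x i| ^ (k - 1)) := by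
        rw [Pi.abs_apply, ← mul_pow_sub_one hk]; ring
    _ ≤ |x| i * signAct k E |x| i :=
        mul_le_mul_of_nonneg_left (abs_mul_pow_le_signAct_abs hx i) (abs_nonneg _)

lemma abs_le_of_isLapEig (hk : k ≠ 0) (hunif : ∀ e ∈ E, #e = k) {M : ℝ}
    (hbound : ∀ z, 0 ≤ z → signForm k E z ≤ M * powSum k z) {lam : ℝ} {x : ι → ℝ}
    (hx0 : x ≠ 0) (hx : ∀ i, lapAct k E x i = lam * x i ^ (k - 1)) : |lam| ≤ M :=
  le_of_mul_le_mul_right ((abs_mul_powSum_abs_le hk hunif hx).trans (hbound _ (abs_nonneg x)))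
    (powSum_pos (abs_nonneg x) (by simpa using hx0))

lemma pos_of_signForm_eq (hk : k ≠ 0) (hunif : ∀ e ∈ E, #e = k) (hconn : IsConnectedH E)
    {M : ℝ} (hbound : ∀ z, 0 ≤ z → signForm k E z ≤ M * powSum k z) {z : ι → ℝ} (hz : 0 ≤ z)
    (hz0 : z ≠ 0) (hFz : signForm k E z = M * powSum k z) (i : ι) : 0 < z i := by
  by_contra hzi
  obtain ⟨j, hj⟩ := Function.ne_iff.mp hz0
  obtain ⟨e, he, ⟨a, ha, hza⟩, ⟨b, hb, hzb⟩⟩ :=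
    hconn.exists_mem_mem_of_not (p := fun j => z j = 0) (le_antisymm (not_lt.mp hzi) (hz i)) hj
  have hzb : 0 < z b := (hz b).lt_of_ne' hzb
  have hg : 0 < powSum k z := powSum_pos hz hz0
  have hM : 0 ≤ M := nonneg_of_mul_nonneg_left (hFz ▸ signForm_nonneg hz) hg
  have hgain : ∀ t, 0 < t → k * z b * t ^ (k - 1) ≤ M * Fintype.card ι * t ^ k := by
    intro t ht
    let w : ι → ℝ := fun j => max (z j) t
    have hzw : z ≤ w := fun j => le_max_left (z j) t
    have hprod : z b * t ^ (k - 1) ≤ ∏ j ∈ e, w j := by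
      simpa only [hunif e he] using mul_pow_card_sub_one_le_prod_max hz ht.le hb
    have hF := signForm_add_le (k := k) hz hzw he
    rw [prod_eq_zero ha hza, sub_zero] at hF
    have hw := (hbound w (hz.trans hzw)).trans
      (mul_le_mul_of_nonneg_left (powSum_max_le hz ht.le) hM)
    have hk0 : (0 : ℝ) ≤ k := Nat.cast_nonneg k
    nlinarith [mul_le_mul_of_nonneg_left hprod hk0]
  obtain ⟨t, ht, hlt⟩ := exists_pos_mul_lt
    (mul_pos (Nat.cast_pos.mpr (Nat.pos_of_ne_zero hk)) hzb) (M * Fintype.card ι)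
  have := hgain t ht
  rw [← pow_sub_one_mul hk t] at this
  nlinarith [mul_lt_mul_of_pos_right hlt (pow_pos ht (k - 1))]

lemma isOddBipartite_of_prod_neg (hk : Even k) (hunif : ∀ e ∈ E, #e = k) {x : ι → ℝ}
    (h : ∀ e ∈ E, ∏ j ∈ e, x j < 0) : IsOddBipartite E := by
  rcases E.eq_empty_or_nonempty with hE | ⟨e, he⟩
  · exact Or.inl hE
  have hodd : ∀ e ∈ E, Odd #(e ∩ univ.filter (x · < 0)) := fun e he => by
    rw [inter_filter, inter_univ]
    exact odd_card_filter_neg_of_prod_neg (h e he)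
  refine Or.inr ⟨univ.filter (x · < 0), fun h0 => ?_, fun huniv => ?_, hodd⟩
  · simpa [h0] using hodd e he
  · have := hodd e he
    rw [huniv, inter_univ, hunif e he] at this
    exact Nat.not_odd_iff_even.mpr hk this

lemma prod_neg_of_signForm_abs_eq (hk : Even k) (hk0 : k ≠ 0) (hunif : ∀ e ∈ E, #e = k)
    {lam : ℝ} {x : ι → ℝ} (hx : ∀ i, lapAct k E x i = lam * x i ^ (k - 1)) (hx0 : ∀ i, x i ≠ 0)
    (hF : signForm k E |x| = lam * powSum k |x|) : ∀ e ∈ E, ∏ j ∈ e, x j < 0 := by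
  have hlap : lam * powSum k x =
      ∑ i, (hdeg E i : ℝ) * x i ^ k - k * ∑ e ∈ E, ∏ j ∈ e, x j := by
    rw [← sum_mul_lapAct hk0 hunif, powSum, mul_sum]
    exact sum_congr rfl fun i _ => by rw [hx i, ← mul_pow_sub_one hk0]; ring
  -- `⟨x, L x^{k-1}⟩` and `F(|x|)` share the degree part; for even `k` the edge parts must cancel.
  have hsum : ∑ e ∈ E, (∏ j ∈ e, |x j| + ∏ j ∈ e, x j) = 0 := by
    simp only [signForm, powSum_abs hk, Pi.abs_apply, hk.pow_abs] at hF
    have hk' : (k : ℝ) ≠ 0 := Nat.cast_ne_zero.mpr hk0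
    refine (mul_eq_zero.mp ?_).resolve_left hk'
    rw [sum_add_distrib]
    linarith
  have hnn : ∀ e ∈ E, 0 ≤ ∏ j ∈ e, |x j| + ∏ j ∈ e, x j := fun e _ => by
    rw [← abs_prod]; linarith [neg_abs_le (∏ j ∈ e, x j)]
  intro e he
  have := (sum_eq_zero_iff_of_nonneg hnn).mp hsum e he
  have hpos : 0 < ∏ j ∈ e, |x j| := prod_pos fun j _ => abs_pos.mpr (hx0 j)
  linarith

lemma isOddBipartite_of_isLapEig (hk : Even k) (hk0 : k ≠ 0) (hunif : ∀ e ∈ E, #e = k)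
    (hconn : IsConnectedH E) {M : ℝ} (hbound : ∀ z, 0 ≤ z → signForm k E z ≤ M * powSum k z)
    {x : ι → ℝ} (hx0 : x ≠ 0) (hx : ∀ i, lapAct k E x i = M * x i ^ (k - 1)) :
    IsOddBipartite E := by
  have habs0 : |x| ≠ 0 := by simpa using hx0
  have hF : signForm k E |x| = M * powSum k |x| :=
    le_antisymm (hbound _ (abs_nonneg x)) <|
      (mul_le_mul_of_nonneg_right (le_abs_self M) (powSum_pos (abs_nonneg x) habs0).le).trans
        (abs_mul_powSum_abs_le hk0 hunif hx)
  have hpos := pos_of_signForm_eq hk0 hunif hconn hbound (abs_nonneg x) habs0 hF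
  exact isOddBipartite_of_prod_neg hk hunif <| prod_neg_of_signForm_abs_eq hk hk0 hunif hx
    (fun i => abs_pos.mp (by simpa using hpos i)) hF

end Comparison

section SignFlip

variable {ι : Type*} [DecidableEq ι] {k : ℕ} {E : Finset (Finset ι)} {V₁ : Finset ι}

def signOn (V₁ : Finset ι) (j : ι) : ℝ := if j ∈ V₁ then -1 else 1

lemma signOn_mul_self (j : ι) : signOn V₁ j * signOn V₁ j = 1 := by
  unfold signOn; split_ifs <;> norm_num

lemma signOn_pow_of_odd {m : ℕ} (hm : Odd m) (j : ι) : signOn V₁ j ^ m = signOn V₁ j := by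
  unfold signOn; split_ifs <;> simp [hm.neg_one_pow]

lemma prod_erase_signOn {e : Finset ι} (hodd : Odd #(e ∩ V₁)) {i : ι} (hi : i ∈ e) :
    ∏ j ∈ e.erase i, signOn V₁ j = -signOn V₁ i := by
  have he : signOn V₁ i * ∏ j ∈ e.erase i, signOn V₁ j = -1 := by
    rw [mul_prod_erase e _ hi]
    simp only [signOn]
    rw [prod_ite_mem, prod_const, hodd.neg_one_pow]
  calc ∏ j ∈ e.erase i, signOn V₁ j
      = signOn V₁ i * (signOn V₁ i * ∏ j ∈ e.erase i, signOn V₁ j) := by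
        rw [← mul_assoc, signOn_mul_self, one_mul]
    _ = -signOn V₁ i := by rw [he]; ring

lemma lapAct_signOn_mul (hk : Odd (k - 1)) (hodd : ∀ e ∈ E, Odd #(e ∩ V₁)) (x : ι → ℝ)
    (i : ι) : lapAct k E (fun j => signOn V₁ j * x j) i = signOn V₁ i * signAct k E x i := by
  have hedge : ∀ e ∈ E.filter (i ∈ ·),
      ∏ j ∈ e.erase i, signOn V₁ j * x j = -signOn V₁ i * ∏ j ∈ e.erase i, x j := fun e he => by
    rw [mem_filter] at he
    rw [prod_mul_distrib, prod_erase_signOn (hodd e he.1) he.2]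
  rw [lapAct, signAct, sum_congr rfl hedge, ← mul_sum, mul_pow, signOn_pow_of_odd hk]
  ring

lemma IsOddBipartite.exists_odd_card_inter [Fintype ι] (h : IsOddBipartite E) :
    ∃ V₁ : Finset ι, ∀ e ∈ E, Odd #(e ∩ V₁) := by
  rcases h with rfl | ⟨V₁, -, -, hV₁⟩
  · exact ⟨∅, by simp⟩
  · exact ⟨V₁, hV₁⟩

lemma isLapEig_of_isSignEig [Fintype ι] (hk : Even k) (hk0 : k ≠ 0) (hE : IsOddBipartite E)
    {μ : ℝ} (h : IsSignEig k E μ) : IsLapEig k E μ := by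
  obtain ⟨V₁, hodd⟩ := hE.exists_odd_card_inter
  obtain ⟨x, hx0, hx⟩ := h
  have hk1 : Odd (k - 1) := Nat.Even.sub_odd (Nat.one_le_iff_ne_zero.mpr hk0) hk odd_one
  refine ⟨fun j => signOn V₁ j * x j, fun h0 => hx0 (funext fun j => ?_), fun i => ?_⟩
  · have hσ : signOn V₁ j ≠ 0 := left_ne_zero_of_mul_eq_one (signOn_mul_self j)
    exact (mul_eq_zero.mp (congr_fun h0 j)).resolve_left hσ
  · rw [lapAct_signOn_mul hk1 hodd, hx i, mul_pow, signOn_pow_of_odd hk1]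
    ring

end SignFlip

theorem largest_lap_le_largest_sign_general {n k : ℕ} (hk : 3 ≤ k)
    (E : Finset (Finset (Fin n))) (hunif : ∀ e ∈ E, e.card = k)
    (lamL lamQ : ℝ) (hL : IsLargestLapEig k E lamL) (hQ : IsLargestSignEig k E lamQ) :
    lamL ≤ lamQ ∧
    (IsConnectedH E → Even k → (lamL = lamQ ↔ IsOddBipartite E)) := by
  obtain ⟨x, hx0, hx⟩ := hL.1
  obtain ⟨i, -⟩ := Function.ne_iff.mp hx0
  have : Nonempty (Fin n) := ⟨i⟩
  obtain ⟨M, hM, hbound⟩ := exists_isSignEig_signForm_le (by omega) hunif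
  have hLM : lamL ≤ M := (le_abs_self _).trans (abs_le_of_isLapEig (by omega) hunif hbound hx0 hx)
  have hMQ : M ≤ lamQ := hQ.2 M hM
  refine ⟨hLM.trans hMQ, fun hconn heven => ⟨fun heq => ?_, fun hE => ?_⟩⟩
  · rw [le_antisymm hLM (heq ▸ hMQ)] at hx
    exact isOddBipartite_of_isLapEig heven (by omega) hunif hconn hbound hx0 hx
  · exact le_antisymm (hLM.trans hMQ) (hL.2 _ (isLapEig_of_isSignEig heven (by omega) hE hQ.1))

/-- For a `k`-uniform hypergraph with Laplacian tensor `L` and signless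
Laplacian tensor `Q`, `λ(L) ≤ λ(Q)`; and if moreover `G` is connected and `k` is even,
then `λ(L) = λ(Q)` if and only if `G` is odd-bipartite. -/
theorem largest_lap_le_largest_sign {n k : ℕ} (hk : 3 ≤ k) (hkn : k ≤ n)
    (E : Finset (Finset (Fin n))) (hunif : ∀ e ∈ E, e.card = k)
    (lamL lamQ : ℝ) (hL : IsLargestLapEig k E lamL) (hQ : IsLargestSignEig k E lamQ) :
    lamL ≤ lamQ ∧
    (IsConnectedH E → Even k → (lamL = lamQ ↔ IsOddBipartite E)) :=
  largest_lap_le_largest_sign_general hk E hunif lamL lamQ hL hQ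
end
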